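/- Let k ≥ 2 and let S be a finite set of prime numbers. Then ∑_{k-free n ≥ 1 : every prime factor of n lies in S} 1/( n_{(k−1)-free} · φ(n_{(k−1)-power}) ) = ∑_{n ≥ 1 : every prime factor of n lies in S} 1/n, where the right-hand side equals the finite Euler product ∏_{p ∈ S} (1 − 1/p)^{−1}. -/
import Mathlib


open Filter
open scoped Classical

/-- `n` is `k`-free: no `k`-th power of a prime divides `n`. -/
def KFree (k n : ℕ) : Prop := ∀ p : ℕ, p.Prime → ¬ p ^ k ∣ n

/-- The `m`-free part of `n`: each prime `p` appearing with exponent `e` in `n` contributes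
`p ^ (e % m)`.  In particular the `1`-free part of any `n` is `1`. -/
def freePart (m n : ℕ) : ℕ := n.factorization.prod fun p e => p ^ (e % m)

/-- The `m`-power part of `n`: each prime `p` appearing with exponent `e` in `n` contributes
`p ^ (m * (e / m))`, so the result is a perfect `m`-th power, and
`n = freePart m n * powerPart m n`.  In particular the `1`-power part of `n` is `n` itself. -/
def powerPart (m n : ℕ) : ℕ := n.factorization.prod fun p e => p ^ (m * (e / m))

lemma freePart_mul_coprime {j m n : ℕ} (hm : m ≠ 0) (hn : n ≠ 0) (h : Nat.Coprime m n) :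
    freePart j (m * n) = freePart j m * freePart j n := by
  unfold freePart
  rw [Nat.factorization_mul hm hn, Finsupp.prod_add_index_of_disjoint]
  rw [Nat.support_factorization, Nat.support_factorization]
  exact h.disjoint_primeFactors

lemma powerPart_mul_coprime {j m n : ℕ} (hm : m ≠ 0) (hn : n ≠ 0) (h : Nat.Coprime m n) :
    powerPart j (m * n) = powerPart j m * powerPart j n := by
  unfold powerPart
  rw [Nat.factorization_mul hm hn, Finsupp.prod_add_index_of_disjoint]
  rw [Nat.support_factorization, Nat.support_factorization]
  exact h.disjoint_primeFactors

lemma powerPart_dvd {j n : ℕ} (hn : n ≠ 0) : powerPart j n ∣ n := by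
  conv_rhs => rw [← Nat.factorization_prod_pow_eq_self hn]
  refine Finsupp.prod_dvd_prod_of_subset_of_dvd subset_rfl fun p _ => ?_
  exact pow_dvd_pow p (by calc j * (n.factorization p / j) = n.factorization p / j * j := by ring
                          _ ≤ n.factorization p := Nat.div_mul_le_self _ _)

lemma freePart_prime_pow {j e p : ℕ} (hp : p.Prime) :
    freePart j (p ^ e) = p ^ (e % j) := by
  unfold freePart
  rw [Nat.Prime.factorization_pow hp, Finsupp.prod_single_index (by simp)]

lemma powerPart_prime_pow {j e p : ℕ} (hp : p.Prime) :
    powerPart j (p ^ e) = p ^ (j * (e / j)) := by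
  unfold powerPart
  rw [Nat.Prime.factorization_pow hp, Finsupp.prod_single_index (by simp)]

lemma kfree_prime_pow_iff {k e p : ℕ} (hp : p.Prime) (hk : 1 ≤ k) :
    KFree k (p ^ e) ↔ e < k := by
  constructor
  · intro h
    by_contra hc
    exact h p hp (pow_dvd_pow p (le_of_not_gt hc))
  · intro h q hq hd
    have hqp : q = p := by
      have : q ∣ p ^ e := dvd_trans (dvd_pow_self q (by omega)) hd
      exact (Nat.prime_dvd_prime_iff_eq hq hp).mp (hq.dvd_of_dvd_pow this)
    subst hqp
    have := (Nat.pow_dvd_pow_iff_le_right hp.one_lt).mp hd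
    omega

lemma kfree_mul_coprime {k m n : ℕ} (hk : 1 ≤ k) (h : Nat.Coprime m n) :
    KFree k (m * n) ↔ KFree k m ∧ KFree k n := by
  constructor
  · intro H
    exact ⟨fun p hp hd => H p hp (hd.trans (dvd_mul_right m n)),
           fun p hp hd => H p hp (hd.trans (dvd_mul_left n m))⟩
  · rintro ⟨H1, H2⟩ p hp hd
    rcases (h.isPrimePow_dvd_mul (hp.isPrimePow.pow (by omega))).mp hd with h' | h'
    · exact H1 p hp h'
    · exact H2 p hp h'

/-- **Theorem 2.** For `k ≥ 2` and a finite set `S` of primes, the sum over `k`-free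
positive integers `n` with all prime factors in `S` of
`1 / (n_{(k-1)-free} · φ(n_{(k-1)-power}))` equals the sum of `1/n` over all positive
integers `n` with all prime factors in `S`, which in turn equals the finite Euler product
`∏_{p ∈ S} (1 - 1/p)⁻¹`. -/
theorem fixedN_totient_identity
    (k : ℕ) (hk : 2 ≤ k)
    (S : Finset ℕ) (hS : ∀ p ∈ S, Nat.Prime p) :
    (∑' n : {n : ℕ // 0 < n ∧ (∀ p : ℕ, p.Prime → p ∣ n → p ∈ S) ∧ KFree k n},
        (1 : ℝ) / ((freePart (k - 1) (n : ℕ) * Nat.totient (powerPart (k - 1) (n : ℕ)) : ℕ) : ℝ))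
      = ∑' n : {n : ℕ // 0 < n ∧ ∀ p : ℕ, p.Prime → p ∣ n → p ∈ S}, (1 : ℝ) / ((n : ℕ) : ℝ)
    ∧ (∑' n : {n : ℕ // 0 < n ∧ ∀ p : ℕ, p.Prime → p ∣ n → p ∈ S}, (1 : ℝ) / ((n : ℕ) : ℝ))
      = ∏ p ∈ S, ((1 : ℝ) - 1 / (p : ℝ))⁻¹ := by
  have hfilter : S.filter Nat.Prime = S := Finset.filter_true_of_mem hS
  obtain ⟨i, rfl⟩ : ∃ i, k = i + 2 := ⟨k - 2, by omega⟩
  set k := i + 2 with hkdef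
  set j := i + 1 with hjdef
  -- the two multiplicative functions
  set g : ℕ → ℝ := fun n =>
    (1 : ℝ) / ((freePart j n * Nat.totient (powerPart j n) : ℕ) : ℝ) with hg
  set f₁ : ℕ → ℝ := fun n => if KFree k n then g n else 0 with hf₁def
  set f₂ : ℕ → ℝ := fun n => (1 : ℝ) / (n : ℝ) with hf₂def
  have hK1 : KFree k 1 := fun p hp hd => by
    have h1 : p ^ k = 1 := Nat.dvd_one.mp hd
    have h2 : 1 < p ^ k := Nat.one_lt_pow (by omega) hp.one_lt
    omega
  have hf₁one : f₁ 1 = 1 := by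
    simp only [hf₁def, if_pos hK1, hg]
    unfold freePart powerPart
    simp [Nat.factorization_one]
  have hf₁zero : f₁ 0 = 0 := by
    simp only [hf₁def]
    rw [if_neg (fun H => H 2 Nat.prime_two (dvd_zero _))]
  have hf₂one : f₂ 1 = 1 := by simp [hf₂def]
  have hf₁mul : ∀ {m n : ℕ}, Nat.Coprime m n → f₁ (m * n) = f₁ m * f₁ n := by
    intro m n h
    rcases eq_or_ne m 0 with rfl | hm
    · have : n = 1 := (Nat.coprime_zero_left n).mp h
      subst this
      rw [Nat.zero_mul, hf₁zero, hf₁one, zero_mul]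
    rcases eq_or_ne n 0 with rfl | hn
    · have : m = 1 := (Nat.coprime_zero_right m).mp h
      subst this
      rw [Nat.one_mul, hf₁zero, hf₁one, one_mul]
    by_cases hK : KFree k m ∧ KFree k n
    · have hKmn : KFree k (m * n) := (kfree_mul_coprime (by omega) h).mpr hK
      simp only [hf₁def, if_pos hKmn, if_pos hK.1, if_pos hK.2, hg]
      have hcop : Nat.Coprime (powerPart j m) (powerPart j n) :=
        Nat.Coprime.coprime_dvd_left (powerPart_dvd hm)
          (Nat.Coprime.coprime_dvd_right (powerPart_dvd hn) h)
      rw [freePart_mul_coprime hm hn h, powerPart_mul_coprime hm hn h,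
        Nat.totient_mul hcop]
      push_cast
      rw [div_mul_div_comm, one_mul]
      ring_nf
    · have hKmn : ¬ KFree k (m * n) := fun H => hK ((kfree_mul_coprime (by omega) h).mp H)
      simp only [hf₁def, if_neg hKmn]
      rcases not_and_or.mp hK with h' | h'
      · rw [if_neg h', zero_mul]
      · rw [if_neg h', mul_zero]
  have hf₂mul : ∀ {m n : ℕ}, Nat.Coprime m n → f₂ (m * n) = f₂ m * f₂ n := by
    intro m n _
    simp only [hf₂def]
    push_cast
    rw [div_mul_div_comm, one_mul]
  -- values at prime powers
  have hf₁pp : ∀ {p : ℕ}, p.Prime → ∀ e, k ≤ e → f₁ (p ^ e) = 0 := by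
    intro p hp e he
    simp only [hf₁def]
    rw [if_neg]
    rw [kfree_prime_pow_iff hp (by omega)]
    omega
  have hf₁sum : ∀ {p : ℕ}, p.Prime → Summable (fun e : ℕ => ‖f₁ (p ^ e)‖) := by
    intro p hp
    refine summable_of_ne_finset_zero (s := Finset.range k) fun e he => ?_
    rw [hf₁pp hp e (by simpa using he), norm_zero]
  have hf₂sum : ∀ {p : ℕ}, p.Prime → Summable (fun e : ℕ => ‖f₂ (p ^ e)‖) := by
    intro p hp
    have hp1 : (1 : ℝ) ≤ p := by exact_mod_cast hp.one_lt.le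
    have : (fun e : ℕ => ‖f₂ (p ^ e)‖) = fun e : ℕ => (1 / (p : ℝ)) ^ e := by
      funext e
      simp only [hf₂def]
      rw [Real.norm_eq_abs, abs_of_nonneg (by positivity)]
      push_cast
      rw [one_div, one_div, inv_pow]
    rw [this]
    exact summable_geometric_of_lt_one (by positivity)
      (by rw [div_lt_one (by linarith [hp.one_lt])]; exact_mod_cast hp.one_lt)
  -- Euler factors
  have hp_real : ∀ {p : ℕ}, p.Prime → (1 : ℝ) < (p : ℝ) := fun hp => by
    exact_mod_cast hp.one_lt
  have hfac₂ : ∀ {p : ℕ}, p.Prime → ∑' e : ℕ, f₂ (p ^ e) = ((1 : ℝ) - 1 / p)⁻¹ := by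
    intro p hp
    have h1 : (1 : ℝ) < (p : ℝ) := hp_real hp
    have : (fun e : ℕ => f₂ (p ^ e)) = fun e : ℕ => (1 / (p : ℝ)) ^ e := by
      funext e
      simp only [hf₂def]
      push_cast
      rw [one_div, one_div, inv_pow]
    rw [this, tsum_geometric_of_lt_one (by positivity) (by rw [div_lt_one (by linarith)]; exact h1)]
  have hfac₁ : ∀ {p : ℕ}, p.Prime → ∑' e : ℕ, f₁ (p ^ e) = ((1 : ℝ) - 1 / p)⁻¹ := by
    intro p hp
    have h1 : (1 : ℝ) < (p : ℝ) := hp_real hp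
    have hp0 : (p : ℝ) ≠ 0 := by linarith
    rw [tsum_eq_sum (s := Finset.range k)
      (fun e he => hf₁pp hp e (by simpa using he))]
    rw [show Finset.range k = Finset.range (j + 1) from rfl, Finset.sum_range_succ]
    -- terms with e < j
    have hterm : ∀ e ∈ Finset.range j, f₁ (p ^ e) = (1 / (p : ℝ)) ^ e := by
      intro e he
      rw [Finset.mem_range] at he
      have hK : KFree k (p ^ e) := (kfree_prime_pow_iff hp (by omega)).mpr (by omega)
      simp only [hf₁def, if_pos hK, hg]
      rw [freePart_prime_pow hp, powerPart_prime_pow hp,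
        Nat.mod_eq_of_lt he, Nat.div_eq_of_lt he, Nat.mul_zero, pow_zero, Nat.totient_one,
        mul_one]
      push_cast
      rw [one_div, one_div, inv_pow]
    rw [Finset.sum_congr rfl hterm]
    -- term e = j
    have hKj : KFree k (p ^ j) := (kfree_prime_pow_iff hp (by omega)).mpr (by omega)
    have hlast : f₁ (p ^ j) = 1 / ((p : ℝ) ^ (j - 1) * ((p : ℝ) - 1)) := by
      simp only [hf₁def, if_pos hKj, hg]
      rw [freePart_prime_pow hp, powerPart_prime_pow hp, Nat.mod_self, Nat.div_self (by omega),
        Nat.mul_one, pow_zero, Nat.totient_prime_pow hp (by omega), one_mul]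
      push_cast [Nat.cast_sub hp.one_lt.le]
      ring_nf
    rw [hlast]
    -- algebra
    simp only [hjdef, Nat.add_sub_cancel]
    have hpi : (p : ℝ) ^ i ≠ 0 := pow_ne_zero _ hp0
    have hpm1 : (p : ℝ) - 1 ≠ 0 := by intro h; nlinarith
    refine eq_inv_of_mul_eq_one_left ?_
    rw [add_mul]
    have e1 : (∑ e ∈ Finset.range (i + 1), (1 / (p : ℝ)) ^ e) * (1 - 1 / p)
        = 1 - (1 / (p : ℝ)) ^ (i + 1) := by
      rw [show (1 - 1 / (p : ℝ)) = -((1 / p) - 1) by ring, mul_neg, geom_sum_mul]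
      ring
    have e2 : (1 : ℝ) / ((p : ℝ) ^ i * ((p : ℝ) - 1)) * (1 - 1 / p)
        = (1 / (p : ℝ)) ^ (i + 1) := by
      rw [div_pow, one_pow]
      field_simp
      ring
    rw [e1, e2]
    ring
  -- Euler product for f₂
  have hprod₂ := (EulerProduct.summable_and_hasSum_factoredNumbers_prod_filter_prime_tsum
    hf₂one hf₂mul hf₂sum S).2.tsum_eq
  have hprod₁ := (EulerProduct.summable_and_hasSum_factoredNumbers_prod_filter_prime_tsum
    hf₁one hf₁mul hf₁sum S).2.tsum_eq
  rw [hfilter] at hprod₂ hprod₁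
  rw [Finset.prod_congr rfl (fun p hp => hfac₂ (hS p hp))] at hprod₂
  rw [Finset.prod_congr rfl (fun p hp => hfac₁ (hS p hp))] at hprod₁
  -- identify the subtype sums
  have hset₂ : {n : ℕ | 0 < n ∧ ∀ p : ℕ, p.Prime → p ∣ n → p ∈ S} = Nat.factoredNumbers S := by
    ext n
    simp only [Set.mem_setOf_eq, Nat.mem_factoredNumbers']
    constructor
    · exact fun h => h.2
    · intro h
      refine ⟨?_, h⟩
      rcases Nat.eq_zero_or_pos n with rfl | hn
      · exfalso
        obtain ⟨q, hq1, hq2⟩ := Nat.exists_infinite_primes (S.sup id + 1)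
        have hqS : q ∉ S := fun hmem => by
          have : q ≤ S.sup id := Finset.le_sup (f := id) hmem
          omega
        exact hqS (h q hq2 (dvd_zero q))
      · exact hn
  have hsum₂eq : (∑' n : {n : ℕ // 0 < n ∧ ∀ p : ℕ, p.Prime → p ∣ n → p ∈ S},
      (1 : ℝ) / ((n : ℕ) : ℝ)) = ∑' m : Nat.factoredNumbers S, f₂ m := by
    have h1 : (∑' n : {n : ℕ // 0 < n ∧ ∀ p : ℕ, p.Prime → p ∣ n → p ∈ S},
        (1 : ℝ) / ((n : ℕ) : ℝ))
        = ∑' x, Set.indicator {n : ℕ | 0 < n ∧ ∀ p : ℕ, p.Prime → p ∣ n → p ∈ S} f₂ x :=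
      tsum_subtype _ f₂
    have h2 : (∑' m : Nat.factoredNumbers S, f₂ (m : ℕ))
        = ∑' x, Set.indicator (Nat.factoredNumbers S) f₂ x := tsum_subtype _ f₂
    rw [h1, h2, hset₂]
  have hsum₁eq : (∑' n : {n : ℕ // 0 < n ∧ (∀ p : ℕ, p.Prime → p ∣ n → p ∈ S) ∧ KFree k n},
      (1 : ℝ) / ((freePart (k - 1) (n : ℕ) * Nat.totient (powerPart (k - 1) (n : ℕ)) : ℕ) : ℝ))
      = ∑' m : Nat.factoredNumbers S, f₁ m := by
    have h1 : (∑' n : {n : ℕ // 0 < n ∧ (∀ p : ℕ, p.Prime → p ∣ n → p ∈ S) ∧ KFree k n},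
        (1 : ℝ) / ((freePart (k - 1) (n : ℕ) * Nat.totient (powerPart (k - 1) (n : ℕ)) : ℕ) : ℝ))
        = ∑' x, Set.indicator
            {n : ℕ | 0 < n ∧ (∀ p : ℕ, p.Prime → p ∣ n → p ∈ S) ∧ KFree k n} g x :=
      tsum_subtype _ g
    have h2 : (∑' m : Nat.factoredNumbers S, f₁ (m : ℕ))
        = ∑' x, Set.indicator (Nat.factoredNumbers S) f₁ x := tsum_subtype _ f₁
    rw [h1, h2]
    congr 1
    funext n
    by_cases h1 : n ∈ {n : ℕ | 0 < n ∧ (∀ p : ℕ, p.Prime → p ∣ n → p ∈ S) ∧ KFree k n}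
    · have hPn : ∀ p : ℕ, p.Prime → p ∣ n → p ∈ S := h1.2.1
      have hKn : KFree k n := h1.2.2
      have h2 : n ∈ Nat.factoredNumbers S := Nat.mem_factoredNumbers'.mpr hPn
      rw [Set.indicator_of_mem h1, Set.indicator_of_mem h2]
      simp only [hf₁def, if_pos hKn]
    · rw [Set.indicator_of_notMem h1]
      by_cases h2 : n ∈ Nat.factoredNumbers S
      · rw [Set.indicator_of_mem h2]
        have hn : 0 < n := Nat.pos_of_ne_zero (Nat.ne_zero_of_mem_factoredNumbers h2)
        have hPn := Nat.mem_factoredNumbers'.mp h2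
        have hKn : ¬ KFree k n := fun hK => h1 ⟨hn, hPn, hK⟩
        simp only [hf₁def, if_neg hKn]
      · rw [Set.indicator_of_notMem h2]
  constructor
  · rw [hsum₁eq, hsum₂eq, hprod₁, hprod₂]
  · rw [hsum₂eq, hprod₂]
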